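/- arXiv:0906.2334 — 4 statements merged into one kernel-verified Lean document; each statement's English description precedes it below -/
import Mathlib

section
/- For every ε > 0 and every x > 0, (1 − Φ(x + ε/x))/(1 − Φ(x)) ≤ 1 − ε·exp(−1.5ε). -/
open Real MeasureTheory

/-- standard normal density -/
noncomputable def stdPhi (t : ℝ) : ℝ := (Real.sqrt (2 * Real.pi))⁻¹ * Real.exp (-t ^ 2 / 2)

/-- standard normal cumulative distribution function -/
noncomputable def stdCDF (x : ℝ) : ℝ := ∫ t in Set.Iic x, stdPhi t

/-! Write `T = 1 - Φ` for the Gaussian tail. If `ε ≤ x²`, then `T x - T (x + ε/x)` is the mass of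
`(x, x + ε/x]`, which is at least `(ε/x) φ(x + ε/x) ≥ (ε/x) φ(x) e^{-3ε/2}` because
`(x + ε/x)² = x² + 2ε + ε²/x²` and `ε²/x² ≤ ε`; Mills' inequality `T x ≤ φ(x)/x` turns this into
`T (x + ε/x) ≤ (1 - ε e^{-3ε/2}) T x`. If `ε > x²`, then `x < √ε` and `x + ε/x ≥ 2√ε`, so by
monotonicity of `T` the ratio is at most its value at `x = √ε`, which is the first case. -/

open Set Filter Topology ProbabilityTheory

lemma stdPhi_eq_gaussianPDFReal : stdPhi = gaussianPDFReal 0 1 := by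
  ext t
  simp [stdPhi, gaussianPDFReal]

lemma stdPhi_pos (t : ℝ) : 0 < stdPhi t :=
  stdPhi_eq_gaussianPDFReal ▸ gaussianPDFReal_pos 0 1 t one_ne_zero

lemma integrable_stdPhi : Integrable stdPhi :=
  stdPhi_eq_gaussianPDFReal ▸ integrable_gaussianPDFReal 0 1

lemma integral_stdPhi : ∫ t, stdPhi t = 1 :=
  stdPhi_eq_gaussianPDFReal ▸ integral_gaussianPDFReal_eq_one 0 one_ne_zero

lemma stdPhi_antitoneOn : AntitoneOn stdPhi (Ici 0) := by
  intro s hs t _ hst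
  unfold stdPhi
  gcongr

lemma hasDerivAt_stdPhi (t : ℝ) : HasDerivAt stdPhi (-t * stdPhi t) t := by
  have h : HasDerivAt (fun s : ℝ => -s ^ 2 / 2) (-t) t := by
    refine ((hasDerivAt_pow 2 t).neg.div_const 2).congr_deriv ?_
    ring
  refine (h.exp.const_mul (√(2 * π))⁻¹).congr_deriv ?_
  simp only [stdPhi]
  ring

lemma tendsto_stdPhi_atTop : Tendsto stdPhi atTop (𝓝 0) := by
  have h : Tendsto (fun t : ℝ => -t ^ 2 / 2) atTop atBot :=
    (tendsto_neg_atTop_atBot.comp (tendsto_pow_atTop two_ne_zero)).atBot_div_const two_pos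
  have h' := (tendsto_exp_atBot.comp h).const_mul (√(2 * π))⁻¹
  rw [mul_zero] at h'
  exact h'

lemma integrable_mul_stdPhi : Integrable fun t => t * stdPhi t := by
  have h := (integrable_mul_exp_neg_mul_sq (b := 1 / 2) one_half_pos).const_mul (√(2 * π))⁻¹
  refine h.congr (Eventually.of_forall fun t => ?_)
  simp only [stdPhi, show -t ^ 2 / 2 = -(1 / 2) * t ^ 2 by ring]
  ring

lemma integral_Ioi_mul_stdPhi (x : ℝ) : ∫ t in Ioi x, t * stdPhi t = stdPhi x := by
  have hderiv (t : ℝ) (_ : t ∈ Ici x) : HasDerivAt (fun s => -stdPhi s) (t * stdPhi t) t := by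
    simpa using (hasDerivAt_stdPhi t).fun_neg
  rw [integral_Ioi_of_hasDerivAt_of_tendsto' hderiv integrable_mul_stdPhi.integrableOn
    (by simpa using tendsto_stdPhi_atTop.neg)]
  simp

noncomputable def stdTail (x : ℝ) : ℝ := ∫ t in Ioi x, stdPhi t

lemma one_sub_stdCDF (x : ℝ) : 1 - stdCDF x = stdTail x := by
  have h := integral_add_compl (measurableSet_Iic (a := x)) integrable_stdPhi
  rw [compl_Iic, integral_stdPhi] at h
  rw [stdCDF, stdTail, ← h, add_sub_cancel_left]

lemma stdTail_pos (x : ℝ) : 0 < stdTail x := by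
  refine (setIntegral_pos_iff_support_of_nonneg_ae
    (Eventually.of_forall fun t => (stdPhi_pos t).le) integrable_stdPhi.integrableOn).2 ?_
  rw [Function.support_eq_univ fun t => (stdPhi_pos t).ne', univ_inter]
  simp

lemma stdTail_antitone : Antitone stdTail := fun _ _ hab =>
  setIntegral_mono_set integrable_stdPhi.integrableOn
    (Eventually.of_forall fun t => (stdPhi_pos t).le) (Ioi_subset_Ioi hab).eventuallyLE

lemma stdTail_le_stdPhi_div {x : ℝ} (hx : 0 < x) : stdTail x ≤ stdPhi x / x := by
  rw [le_div_iff₀ hx, ← integral_Ioi_mul_stdPhi, stdTail, ← integral_mul_const]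
  refine setIntegral_mono_on (integrable_stdPhi.mul_const x).integrableOn
    integrable_mul_stdPhi.integrableOn measurableSet_Ioi fun t ht => ?_
  rw [mul_comm t]
  exact mul_le_mul_of_nonneg_left ht.out.le (stdPhi_pos t).le

lemma stdTail_eq_integral_Ioc_add {a b : ℝ} (hab : a ≤ b) :
    stdTail a = (∫ t in Ioc a b, stdPhi t) + stdTail b := by
  rw [stdTail, stdTail, ← setIntegral_union (Ioc_disjoint_Ioi le_rfl) measurableSet_Ioi
    integrable_stdPhi.integrableOn integrable_stdPhi.integrableOn, Ioc_union_Ioi_eq_Ioi hab]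

lemma mul_stdPhi_le_integral_Ioc {a b : ℝ} (ha : 0 ≤ a) (hab : a ≤ b) :
    (b - a) * stdPhi b ≤ ∫ t in Ioc a b, stdPhi t := by
  have h := setIntegral_ge_of_const_le_real measurableSet_Ioc (by simp)
    (fun t ht => stdPhi_antitoneOn (ha.trans ht.1.le) (ha.trans hab) ht.2)
    integrable_stdPhi.integrableOn
  rwa [Real.volume_real_Ioc_of_le hab, mul_comm] at h

lemma stdPhi_mul_exp_le_stdPhi_add_div {ε x : ℝ} (hε : 0 ≤ ε) (hx : 0 < x) (h : ε ≤ x ^ 2) :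
    stdPhi x * exp (-1.5 * ε) ≤ stdPhi (x + ε / x) := by
  have hsq : (ε / x) ^ 2 ≤ ε := by
    rw [div_pow, div_le_iff₀ (by positivity)]
    nlinarith
  have hexpand : (x + ε / x) ^ 2 = x ^ 2 + 2 * ε + (ε / x) ^ 2 := by
    field_simp
    ring
  rw [stdPhi, stdPhi, mul_assoc, ← exp_add]
  gcongr
  rw [hexpand]
  linarith

lemma stdTail_add_div_div_stdTail_le {ε x : ℝ} (hε : 0 ≤ ε) (hx : 0 < x) (h : ε ≤ x ^ 2) :
    stdTail (x + ε / x) / stdTail x ≤ 1 - ε * exp (-1.5 * ε) := by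
  have hεx : 0 ≤ ε / x := div_nonneg hε hx.le
  have hsplit := stdTail_eq_integral_Ioc_add (a := x) (le_add_of_nonneg_right hεx)
  have hbody : stdTail x * (ε * exp (-1.5 * ε)) ≤ ∫ t in Ioc x (x + ε / x), stdPhi t :=
    calc stdTail x * (ε * exp (-1.5 * ε))
        ≤ stdPhi x / x * (ε * exp (-1.5 * ε)) := by gcongr; exact stdTail_le_stdPhi_div hx
      _ = ε / x * (stdPhi x * exp (-1.5 * ε)) := by ring
      _ ≤ (x + ε / x - x) * stdPhi (x + ε / x) := by
          rw [add_sub_cancel_left]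
          gcongr
          exact stdPhi_mul_exp_le_stdPhi_add_div hε hx h
      _ ≤ ∫ t in Ioc x (x + ε / x), stdPhi t :=
          mul_stdPhi_le_integral_Ioc hx.le (le_add_of_nonneg_right hεx)
  rw [div_le_iff₀ (stdTail_pos x)]
  linarith

lemma two_mul_sqrt_le_add_div {ε x : ℝ} (hε : 0 ≤ ε) (hx : 0 < x) : 2 * √ε ≤ x + ε / x := by
  have hsum : x + ε / x = (x ^ 2 + ε) / x := by field_simp
  rw [hsum, le_div_iff₀ hx]
  nlinarith [sq_nonneg (x - √ε), sq_sqrt hε]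

theorem stmt_4 (ε x : ℝ) (hε : 0 < ε) (hx : 0 < x) :
    (1 - stdCDF (x + ε / x)) / (1 - stdCDF x) ≤ 1 - ε * Real.exp (-1.5 * ε) := by
  rw [one_sub_stdCDF, one_sub_stdCDF]
  rcases le_or_gt ε (x ^ 2) with h | h
  · exact stdTail_add_div_div_stdTail_le hε.le hx h
  · have hsqrt : 0 < √ε := sqrt_pos.2 hε
    have hnum : √ε + ε / √ε ≤ x + ε / x := by
      rw [div_sqrt, ← two_mul]
      exact two_mul_sqrt_le_add_div hε.le hx
    calc stdTail (x + ε / x) / stdTail x ≤ stdTail (√ε + ε / √ε) / stdTail √ε :=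
          div_le_div₀ (stdTail_pos _).le (stdTail_antitone hnum) (stdTail_pos _)
            (stdTail_antitone ((le_sqrt' hx).2 h.le))
      _ ≤ 1 - ε * exp (-1.5 * ε) :=
          stdTail_add_div_div_stdTail_le hε.le hsqrt (sq_sqrt hε.le).ge
end

section
/- Let X_1, …, X_n be real numbers with order statistics X_{(1)} ≤ ⋯ ≤ X_{(n)}, sample mean X̄, and let X̄_{[a,b]} denote the average of X_{(a)}, …, X_{(b)}. Then (1/n)·∑_{i=1}^n (X_i − X̄)² = ∑_{i=1}^{n−1} (i(n−i)/n²)·(X̄_{[i+1,n]} − X̄_{[1,i]})·(X_{(i+1)} − X_{(i)}). -/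
/-!
The sample variance is invariant under relabelling, so it may be computed from `Y`.
By Lagrange's identity, `n² · variance = ∑_{p<q} (Y q - Y p)²`. Writing each difference
`Y q - Y p` once as the telescoping sum of the spacings `S k`, `p ≤ k < q`, and exchanging
the order of summation, the coefficient of `S k` is `∑_{p ≤ k < q} (Y q - Y p)`, which is
`(k+1)(n-k-1)` times the difference of the upper and lower group means.
-/

open Finset

theorem sum_range_sum_range_sub_sq {R : Type*} [CommRing R] (n : ℕ) (Y : ℕ → R) :
    ∑ q ∈ range n, ∑ p ∈ range q, (Y q - Y p) ^ 2 =
      n * ∑ j ∈ range n, Y j ^ 2 - (∑ j ∈ range n, Y j) ^ 2 := by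
  induction n with
  | zero => simp
  | succ m ih =>
    have hlast : ∑ p ∈ range m, (Y m - Y p) ^ 2 =
        m * Y m ^ 2 - 2 * Y m * ∑ p ∈ range m, Y p + ∑ p ∈ range m, Y p ^ 2 := by
      simp only [sub_sq, sum_add_distrib, sum_sub_distrib, mul_sum, sum_const, card_range,
        nsmul_eq_mul]
    rw [sum_range_succ, ih, hlast, sum_range_succ, sum_range_succ]
    push_cast
    ring

theorem one_div_card_mul_sum_sub_mean_sq {ι K : Type*} [Field K] [CharZero K] (s : Finset ι)
    (f : ι → K) :
    1 / (#s : K) * ∑ i ∈ s, (f i - (∑ j ∈ s, f j) / #s) ^ 2 =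
      (#s * ∑ i ∈ s, f i ^ 2 - (∑ i ∈ s, f i) ^ 2) / (#s : K) ^ 2 := by
  rcases s.eq_empty_or_nonempty with rfl | hs
  · simp
  have hcard : (#s : K) ≠ 0 := by exact_mod_cast hs.card_pos.ne'
  simp only [sub_sq, sum_add_distrib, sum_sub_distrib, ← sum_mul, ← mul_sum, sum_const,
    nsmul_eq_mul]
  field_simp
  ring

theorem sum_range_sum_range_sub_sq_eq_sum_spacing {R : Type*} [CommRing R] (n : ℕ)
    (Y : ℕ → R) :
    ∑ q ∈ range n, ∑ p ∈ range q, (Y q - Y p) ^ 2 =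
      ∑ k ∈ range (n - 1), (Y (k + 1) - Y k) *
        ((k + 1) * ∑ q ∈ Ico (k + 1) n, Y q - (n - (k + 1) : ℕ) * ∑ p ∈ range (k + 1), Y p) := by
  calc ∑ q ∈ range n, ∑ p ∈ range q, (Y q - Y p) ^ 2
      = ∑ q ∈ range n, ∑ p ∈ range q, ∑ k ∈ Ico p q, (Y q - Y p) * (Y (k + 1) - Y k) := by
        refine sum_congr rfl fun q _ => sum_congr rfl fun p hp => ?_
        rw [← mul_sum, sum_Ico_sub Y (mem_range.mp hp).le, sq]
    _ = ∑ q ∈ range n, ∑ k ∈ range q, ∑ p ∈ range (k + 1), (Y q - Y p) * (Y (k + 1) - Y k) :=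
        sum_congr rfl fun q _ => sum_comm' fun p k => by simp only [mem_range, mem_Ico]; omega
    _ = ∑ k ∈ range (n - 1), ∑ q ∈ Ico (k + 1) n, ∑ p ∈ range (k + 1),
          (Y q - Y p) * (Y (k + 1) - Y k) :=
        sum_comm' fun q k => by simp only [mem_range, mem_Ico]; omega
    _ = _ := by
        refine sum_congr rfl fun k _ => ?_
        simp only [← sum_mul, sum_sub_distrib, sum_const, card_range, Nat.card_Ico, nsmul_eq_mul,
          ← mul_sum, sum_comm (s := Ico (k + 1) n) (t := range (k + 1))]
        push_cast
        ring

theorem stmt_5_general (n : ℕ) (X Y : ℕ → ℝ)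
    (σ : Equiv.Perm ℕ) (hσ : ∀ k, n ≤ k → σ k = k)
    (hXY : ∀ k, Y k = X (σ k)) :
    (1 / (n : ℝ)) * ∑ j ∈ range n, (X j - (∑ l ∈ range n, X l) / n) ^ 2 =
      ∑ i ∈ range (n - 1),
        (((i + 1) * (n - (i + 1)) : ℝ) / (n : ℝ) ^ 2) *
          ((∑ j ∈ Ico (i + 1) n, Y j) / ((n : ℝ) - (i + 1)) -
            (∑ j ∈ range (i + 1), Y j) / ((i : ℝ) + 1)) *
          (Y (i + 1) - Y i) := by
  have hsupp : {k | σ k ≠ k} ⊆ range n := fun k hk =>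
    mem_range.mpr (not_le.mp fun h => hk (hσ k h))
  have hsort (g : ℝ → ℝ) : ∑ j ∈ range n, g (X j) = ∑ j ∈ range n, g (Y j) := by
    simp only [hXY]
    exact (σ.sum_comp _ (g ∘ X) hsupp).symm
  have hsum : ∑ l ∈ range n, X l = ∑ l ∈ range n, Y l := hsort id
  rw [hsum, hsort (fun t => (t - (∑ l ∈ range n, Y l) / n) ^ 2)]
  have hvar := one_div_card_mul_sum_sub_mean_sq (range n) Y
  rw [card_range] at hvar
  rw [hvar, ← sum_range_sum_range_sub_sq, sum_range_sum_range_sub_sq_eq_sum_spacing, sum_div]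
  refine sum_congr rfl fun k hk => ?_
  have hkn : k + 1 < n := by have := mem_range.mp hk; omega
  have hkn' : (k : ℝ) + 1 < n := by exact_mod_cast hkn
  push_cast [Nat.cast_sub hkn.le]
  field_simp [sub_ne_zero.mpr hkn'.ne']

/-- Yatracos's sample variance decomposition: if `Y` lists the order statistics
(a monotone rearrangement of `X 0, …, X (n-1)`), then the sample variance equals
the sum of the spacing components. Here groups are `Y 0, …, Y i` (size `i+1`) and
`Y (i+1), …, Y (n-1)` (size `n-i-1`), matching 1-based indices `1,…,i` and `i+1,…,n`. -/
theorem stmt_5 (n : ℕ) (hn : 1 ≤ n) (X Y : ℕ → ℝ)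
    (σ : Equiv.Perm ℕ) (hσ : ∀ k, n ≤ k → σ k = k)
    (hXY : ∀ k, Y k = X (σ k))
    (hmono : ∀ i j, i ≤ j → j < n → Y i ≤ Y j) :
    (1 / (n : ℝ)) * ∑ j ∈ range n, (X j - (∑ l ∈ range n, X l) / n) ^ 2 =
      ∑ i ∈ range (n - 1),
        (((i + 1) * (n - (i + 1)) : ℝ) / (n : ℝ) ^ 2) *
          ((∑ j ∈ Ico (i + 1) n, Y j) / ((n : ℝ) - (i + 1)) -
            (∑ j ∈ range (i + 1), Y j) / ((i : ℝ) + 1)) *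
          (Y (i + 1) - Y i) :=
  stmt_5_general n X Y σ hσ hXY
end

section
/- Let Z_1, …, Z_n be i.i.d. standard normal random variables with order statistics Z_{(1)} ≤ ⋯ ≤ Z_{(n)}. For any ε > 0 and index i, P(Z_{(i)}·(Z_{(i+1)} − Z_{(i)}) > ε and Z_{(i)} > 0) ≤ (1 − ε·e^{−1.5ε})^{n−i}. -/
/-!
Break ties between coordinates by their index, so that the sample is totally ordered
lexicographically by `(value, index)`. On the event, let `j₀` be the index of `Z_(i)` and `S` the
`n - i` indices ranked above it: then `x = Z_{j₀} > 0` and every coordinate in `S` exceeds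
`x + ε / x`. Given the coordinates outside `S`, those in `S` are independent standard normals,
and shifting the density gives `P(Z > x + ε / x) ≤ e^{-ε} P(Z > x)`. Hence the piece of the
event indexed by `(j₀, S)` has probability at most `e^{-ε (n - i)}` times that of the piece with
threshold `x` itself. For a fixed size of `S` the latter pieces are disjoint, because the ranks
determine `j₀` and `S`, so their total mass is at most `1`. Finally
`e^{-ε} ≤ 1 - ε e^{-1.5 ε}`.
-/

open Real MeasureTheory ProbabilityTheory

/-- `ord f j` is the `j`-th smallest value (0-based) among `f 0, …, f (n-1)`,
i.e. the `(j+1)`-th order statistic; it is `0` for out-of-range `j`. -/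
noncomputable def ord {n : ℕ} (f : Fin n → ℝ) (j : ℕ) : ℝ :=
  if h : j < n then f (Tuple.sort f ⟨j, h⟩) else 0

open Set
open scoped ENNReal

lemma exp_neg_le_one_sub_mul_exp {ε : ℝ} (hε : 0 ≤ ε) :
    exp (-ε) ≤ 1 - ε * exp (-1.5 * ε) := by
  have hinv : exp ε * exp (-ε) = 1 := by rw [← exp_add, add_neg_cancel, exp_zero]
  have : ε * exp (-1.5 * ε) ≤ (exp ε - 1) * exp (-ε) :=
    mul_le_mul (by linarith [add_one_le_exp ε]) (exp_le_exp.2 (by linarith))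
      (exp_nonneg _) (by linarith [add_one_le_exp ε])
  linarith

lemma gaussianReal_Ioi_add_le (x : ℝ) {d : ℝ} (hd : 0 ≤ d) :
    gaussianReal 0 1 (Ioi (x + d)) ≤
      ENNReal.ofReal (exp (-(x * d))) * gaussianReal 0 1 (Ioi x) := by
  have hshift : ∫⁻ t in Ioi (x + d), gaussianPDF 0 1 t =
      ∫⁻ t in Ioi x, gaussianPDF 0 1 (t + d) := by
    rw [← lintegral_indicator measurableSet_Ioi, ← lintegral_indicator measurableSet_Ioi,
      ← lintegral_add_right_eq_self _ d]
    congr 1 with t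
    simp only [indicator, mem_Ioi, add_lt_add_iff_right]
  rw [gaussianReal_apply _ one_ne_zero, gaussianReal_apply _ one_ne_zero, hshift,
    ← lintegral_const_mul' _ _ ENNReal.ofReal_ne_top]
  refine setLIntegral_mono' measurableSet_Ioi fun t (ht : x < t) => ?_
  rw [gaussianPDF, gaussianPDF, ← ENNReal.ofReal_mul (exp_nonneg _), gaussianPDFReal,
    gaussianPDFReal, mul_left_comm, ← exp_add]
  gcongr
  simp only [NNReal.coe_one, sub_zero]
  nlinarith [mul_le_mul_of_nonneg_right ht.le hd]

section RankPiece

variable {ι : Type*}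

-- `g j₀` plays the order statistic and `S` the indices ranked above it. Breaking ties by index
-- makes `(j₀, S)` a function of `g` and `S.card` when `t = id`.
def rankPiece [LinearOrder ι] (t : ℝ → ℝ) (j₀ : ι) (S : Finset ι) : Set (ι → ℝ) :=
  {g | 0 < g j₀ ∧ (∀ j ∉ S, j ≠ j₀ → toLex (g j, j) < toLex (g j₀, j₀)) ∧
    ∀ j ∈ S, t (g j₀) < g j}

section Combinatorics

variable [Fintype ι] [LinearOrder ι]

noncomputable def lexAbove (g : ι → ℝ) (j₀ : ι) : Finset ι :=
  Finset.univ.filter fun j => toLex (g j₀, j₀) < toLex (g j, j)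

lemma eq_lexAbove_of_mem_rankPiece_id {g : ι → ℝ} {j₀ : ι} {S : Finset ι}
    (hg : g ∈ rankPiece id j₀ S) : S = lexAbove g j₀ := by
  ext j
  simp only [lexAbove, Finset.mem_filter, Finset.mem_univ, true_and]
  refine ⟨fun hj => Prod.Lex.toLex_lt_toLex.2 (Or.inl (hg.2.2 j hj)), fun hlt => ?_⟩
  by_contra hj
  have hne : j ≠ j₀ := by rintro rfl; exact lt_irrefl _ hlt
  exact lt_asymm hlt (hg.2.1 j hj hne)

lemma card_lexAbove_lt_of_toLex_lt (g : ι → ℝ) {a b : ι}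
    (hab : toLex (g a, a) < toLex (g b, b)) : (lexAbove g b).card < (lexAbove g a).card := by
  refine Finset.card_lt_card ((Finset.ssubset_iff_of_subset fun j hj => ?_).2 ⟨b, ?_, ?_⟩)
  · simp only [lexAbove, Finset.mem_filter, Finset.mem_univ, true_and] at hj ⊢
    exact hab.trans hj
  · simpa [lexAbove] using hab
  · simp [lexAbove]

lemma eq_of_mem_rankPiece_id {g : ι → ℝ} {j₀ j₁ : ι} {S T : Finset ι}
    (h₀ : g ∈ rankPiece id j₀ S) (h₁ : g ∈ rankPiece id j₁ T) (hST : S.card = T.card) :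
    j₀ = j₁ ∧ S = T := by
  rw [eq_lexAbove_of_mem_rankPiece_id h₀, eq_lexAbove_of_mem_rankPiece_id h₁] at hST ⊢
  obtain rfl : j₀ = j₁ := by
    rcases lt_trichotomy (toLex (g j₀, j₀)) (toLex (g j₁, j₁)) with h | h | h
    · exact absurd hST (card_lexAbove_lt_of_toLex_lt g h).ne'
    · exact congrArg Prod.snd (toLex.injective h)
    · exact absurd hST (card_lexAbove_lt_of_toLex_lt g h).ne
  exact ⟨rfl, rfl⟩

end Combinatorics

lemma strictMono_toLex_sort {n : ℕ} {α : Type*} [LinearOrder α] (g : Fin n → α) :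
    StrictMono fun k => toLex (g (Tuple.sort g k), Tuple.sort g k) :=
  fun _ _ hab => (Tuple.eq_sort_iff' (σ := Tuple.sort g)).1 rfl hab

lemma mem_iUnion_rankPiece_of_ord {n k : ℕ} (hk : k + 1 < n) {t : ℝ → ℝ} {g : Fin n → ℝ}
    (hpos : 0 < ord g k) (ht : t (ord g k) < ord g (k + 1)) :
    g ∈ ⋃ q : {q : Fin n × Finset (Fin n) // q.1 ∉ q.2 ∧ q.2.card = n - (k + 1)},
      rankPiece t q.1.1 q.1.2 := by
  set σ := Tuple.sort g
  let k₀ : Fin n := ⟨k, by omega⟩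
  let k₁ : Fin n := ⟨k + 1, hk⟩
  have hk₀ : ord g k = g (σ k₀) := dif_pos k₀.2
  have hk₁ : ord g (k + 1) = g (σ k₁) := dif_pos hk
  have hk₀₁ : k₀ < k₁ := Fin.mk_lt_mk.2 k.lt_succ_self
  refine mem_iUnion.2 ⟨⟨(σ k₀, (Finset.Ici k₁).map σ.toEmbedding), ?_, ?_⟩, hk₀ ▸ hpos,
    fun j hj hne => ?_, fun j hj => ?_⟩
  · simpa using hk₀₁
  · simp [k₁]
  · obtain ⟨l, rfl⟩ := σ.surjective j
    have hl : (l : ℕ) < k + 1 := Fin.lt_def.1 (by simpa using hj)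
    have hl' : (l : ℕ) ≠ k := fun h => hne (congrArg σ (Fin.ext h))
    exact strictMono_toLex_sort g (show (l : ℕ) < k by omega)
  · obtain ⟨l, hl, rfl⟩ := Finset.mem_map.1 hj
    rw [← hk₀]
    exact ht.trans_le (hk₁ ▸ Tuple.monotone_sort g (Finset.mem_Ici.1 hl))

lemma measurable_toLex_lt {α : Type*} [MeasurableSpace α] [LT ι] {f₁ f₂ : α → ℝ}
    (h₁ : Measurable f₁) (h₂ : Measurable f₂) (a b : ι) :
    Measurable fun x => toLex (f₁ x, a) < toLex (f₂ x, b) := by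
  simp only [Prod.Lex.toLex_lt_toLex]
  exact (measurableSet_setOfPred.1 (measurableSet_lt h₁ h₂)).or
    ((measurableSet_setOfPred.1 (measurableSet_eq_fun h₁ h₂)).and measurable_const)

section Measure

variable [Fintype ι] (ν : Measure ℝ) [SigmaFinite ν]

lemma measure_pi_setOf_mem_and_forall_lt (p : ι → Prop) [DecidablePred p]
    {C : Set (Subtype p → ℝ)} (hC : MeasurableSet C) {u : (Subtype p → ℝ) → ℝ}
    (hu : Measurable u) :
    Measure.pi (fun _ => ν)
        {g | (fun j : Subtype p => g ↑j) ∈ C ∧ ∀ j, ¬ p j → u (fun j : Subtype p => g ↑j) < g j} =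
      ∫⁻ b in C, ν (Ioi (u b)) ^ Fintype.card {j // ¬ p j} ∂Measure.pi fun _ => ν := by
  set T : Set ((Subtype p → ℝ) × ({j // ¬ p j} → ℝ)) := {q | q.1 ∈ C ∧ ∀ j, u q.1 < q.2 j}
  have hT : MeasurableSet T := measurableSet_setOfPred.2 <| (hC.mem.comp measurable_fst).and <|
    .forall fun j => measurableSet_setOfPred.1 <|
      measurableSet_lt (hu.comp measurable_fst) ((measurable_pi_apply j).comp measurable_snd)
  calc _ = Measure.pi (fun _ => ν) (MeasurableEquiv.piEquivPiSubtypeProd (fun _ => ℝ) p ⁻¹' T) := by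
        congr 1 with g; simp [T, MeasurableEquiv.piEquivPiSubtypeProd, Equiv.piEquivPiSubtypeProd]
    _ = ∫⁻ b, Measure.pi (fun _ => ν) (Prod.mk b ⁻¹' T) ∂Measure.pi fun _ => ν := by
        rw [(measurePreserving_piEquivPiSubtypeProd (fun _ => ν) p).measure_preimage
          hT.nullMeasurableSet, Measure.prod_apply hT]
    _ = _ := by
        rw [← lintegral_indicator hC]
        congr 1 with b
        by_cases hb : b ∈ C
        · have : Prod.mk b ⁻¹' T = univ.pi fun _ => Ioi (u b) := by ext; simp [T, hb]
          simp [this, hb, Measure.pi_pi]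
        · have : Prod.mk b ⁻¹' T = ∅ := by ext; simp [T, hb]
          simp [this, hb]

variable [LinearOrder ι]

lemma measurableSet_rankPiece {t : ℝ → ℝ} (ht : Measurable t) (j₀ : ι) (S : Finset ι) :
    MeasurableSet (rankPiece t j₀ S) :=
  measurableSet_setOfPred.2 <| (measurableSet_setOfPred.1 (measurableSet_lt measurable_const
    (measurable_pi_apply j₀))).and <|
    (Measurable.forall fun j => measurable_const.imp <| measurable_const.imp <|
      measurable_toLex_lt (measurable_pi_apply j) (measurable_pi_apply j₀) j j₀).and <|
    .forall fun j => measurable_const.imp <| measurableSet_setOfPred.1 <|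
      measurableSet_lt (ht.comp (measurable_pi_apply j₀)) (measurable_pi_apply j)

lemma measure_pi_rankPiece_le {t₁ t₂ : ℝ → ℝ} (ht₁ : Measurable t₁) (ht₂ : Measurable t₂)
    {c : ℝ≥0∞} (hc : c ≠ ∞) (htail : ∀ x, 0 < x → ν (Ioi (t₁ x)) ≤ c * ν (Ioi (t₂ x)))
    {j₀ : ι} {S : Finset ι} (hj₀ : j₀ ∉ S) :
    Measure.pi (fun _ => ν) (rankPiece t₁ j₀ S) ≤
      c ^ S.card * Measure.pi (fun _ => ν) (rankPiece t₂ j₀ S) := by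
  let C : Set ({j // j ∉ S} → ℝ) := {b | 0 < b ⟨j₀, hj₀⟩ ∧
    ∀ j : {j // j ∉ S}, (j : ι) ≠ j₀ → toLex (b j, (j : ι)) < toLex (b ⟨j₀, hj₀⟩, j₀)}
  have hC : MeasurableSet C :=
    measurableSet_setOfPred.2 <| (measurableSet_setOfPred.1 (measurableSet_lt measurable_const
      (measurable_pi_apply _))).and <| .forall fun j => measurable_const.imp <|
        measurable_toLex_lt (measurable_pi_apply j) (measurable_pi_apply _) _ _
  have hmeasure (t : ℝ → ℝ) (ht : Measurable t) : Measure.pi (fun _ => ν) (rankPiece t j₀ S) =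
      ∫⁻ b in C, ν (Ioi (t (b ⟨j₀, hj₀⟩))) ^ S.card ∂Measure.pi fun _ => ν := by
    have hpiece : rankPiece t j₀ S =
        {g | (fun j : {j // j ∉ S} => g ↑j) ∈ C ∧ ∀ j, ¬ j ∉ S → t (g j₀) < g j} := by
      ext g
      simp [rankPiece, C, and_assoc]
    have hcard : Fintype.card {j // ¬ j ∉ S} = S.card := by simp
    rw [hpiece, ← hcard]
    exact measure_pi_setOf_mem_and_forall_lt ν _ hC (ht.comp (measurable_pi_apply ⟨j₀, hj₀⟩))
  rw [hmeasure t₁ ht₁, hmeasure t₂ ht₂, ← lintegral_const_mul' _ _ (ENNReal.pow_ne_top hc)]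
  exact setLIntegral_mono' hC fun b hb => by
    rw [← mul_pow]; exact pow_le_pow_left' (htail _ hb.1) _

end Measure

lemma measure_pi_iUnion_rankPiece_le [Fintype ι] [LinearOrder ι] (ν : Measure ℝ)
    [IsProbabilityMeasure ν] {t : ℝ → ℝ} (ht : Measurable t) {c : ℝ≥0∞} (hc : c ≠ ∞)
    (htail : ∀ x, 0 < x → ν (Ioi (t x)) ≤ c * ν (Ioi x)) (m : ℕ) :
    Measure.pi (fun _ : ι => ν)
        (⋃ q : {q : ι × Finset ι // q.1 ∉ q.2 ∧ q.2.card = m}, rankPiece t q.1.1 q.1.2) ≤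
      c ^ m := by
  have hdisj : Pairwise (Function.onFun Disjoint
      fun q : {q : ι × Finset ι // q.1 ∉ q.2 ∧ q.2.card = m} => rankPiece id q.1.1 q.1.2) := by
    intro q₀ q₁ hne
    refine disjoint_left.2 fun g h₀ h₁ => hne ?_
    obtain ⟨h₁, h₂⟩ := eq_of_mem_rankPiece_id h₀ h₁ (q₀.2.2.trans q₁.2.2.symm)
    exact Subtype.ext (Prod.ext h₁ h₂)
  calc _ ≤ ∑' q : {q : ι × Finset ι // q.1 ∉ q.2 ∧ q.2.card = m},
          Measure.pi (fun _ => ν) (rankPiece t q.1.1 q.1.2) := measure_iUnion_le _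
    _ ≤ ∑' q : {q : ι × Finset ι // q.1 ∉ q.2 ∧ q.2.card = m},
          c ^ m * Measure.pi (fun _ => ν) (rankPiece id q.1.1 q.1.2) :=
        ENNReal.tsum_le_tsum fun q => by
          simpa only [q.2.2] using measure_pi_rankPiece_le ν ht measurable_id hc htail q.2.1
    _ = c ^ m * Measure.pi (fun _ => ν)
          (⋃ q : {q : ι × Finset ι // q.1 ∉ q.2 ∧ q.2.card = m}, rankPiece id q.1.1 q.1.2) := by
        rw [ENNReal.tsum_mul_left,
          measure_iUnion hdisj fun q => measurableSet_rankPiece measurable_id _ _]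
    _ ≤ c ^ m := mul_le_of_le_one_right' prob_le_one

end RankPiece

/-- For i.i.d. standard normal `Z_1, …, Z_n` and a 1-based index `1 ≤ i < n`,
`P(Z_{(i)}(Z_{(i+1)} - Z_{(i)}) > ε, Z_{(i)} > 0) ≤ (1 - ε e^{-1.5ε})^{n-i}`.
(The 1-based order statistic `Z_{(i)}` is `ord (fun j => Z j ω) (i-1)`.) -/
theorem stmt_12 {Ω : Type*} [MeasurableSpace Ω] (μ : Measure Ω) [IsProbabilityMeasure μ]
    (n : ℕ) (Z : Fin n → Ω → ℝ)
    (hindep : iIndepFun Z μ)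
    (hdist : ∀ j, Measure.map (Z j) μ = gaussianReal 0 1)
    (ε : ℝ) (hε : 0 < ε) (i : ℕ) (hi1 : 1 ≤ i) (hi2 : i < n) :
    μ {ω | ε < ord (fun j => Z j ω) (i - 1) *
              (ord (fun j => Z j ω) i - ord (fun j => Z j ω) (i - 1)) ∧
           0 < ord (fun j => Z j ω) (i - 1)} ≤
      ENNReal.ofReal ((1 - ε * Real.exp (-1.5 * ε)) ^ (n - i)) := by
  obtain ⟨k, rfl⟩ : ∃ k, i = k + 1 := ⟨i - 1, by omega⟩
  simp only [Nat.add_sub_cancel]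
  have hZ (j : Fin n) : AEMeasurable (Z j) μ :=
    .of_map_ne_zero (by rw [hdist j]; exact IsProbabilityMeasure.ne_zero _)
  have hlaw : μ.map (fun ω j => Z j ω) = Measure.pi fun _ => gaussianReal 0 1 := by
    rw [(iIndepFun_iff_map_fun_eq_pi_map hZ).1 hindep]
    simp only [hdist]
  have htail (x : ℝ) (hx : 0 < x) : gaussianReal 0 1 (Ioi (x + ε / x)) ≤
      ENNReal.ofReal (exp (-ε)) * gaussianReal 0 1 (Ioi x) := by
    simpa [mul_div_cancel₀ ε hx.ne'] using gaussianReal_Ioi_add_le x (div_nonneg hε.le hx.le)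
  have hsub : {ω | ε < ord (fun j => Z j ω) k * (ord (fun j => Z j ω) (k + 1) -
      ord (fun j => Z j ω) k) ∧ 0 < ord (fun j => Z j ω) k} ⊆ (fun ω j => Z j ω) ⁻¹'
      ⋃ q : {q : Fin n × Finset (Fin n) // q.1 ∉ q.2 ∧ q.2.card = n - (k + 1)},
        rankPiece (fun x => x + ε / x) q.1.1 q.1.2 := fun ω ⟨hgap, hpos⟩ =>
    mem_iUnion_rankPiece_of_ord hi2 hpos <| by
      rwa [← lt_sub_iff_add_lt', div_lt_iff₀' hpos]
  calc _ ≤ μ.map (fun ω j => Z j ω) _ :=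
        (measure_mono hsub).trans (Measure.le_map_apply (aemeasurable_pi_lambda _ hZ) _)
    _ ≤ ENNReal.ofReal (exp (-ε)) ^ (n - (k + 1)) :=
        hlaw ▸ measure_pi_iUnion_rankPiece_le _ (by fun_prop) ENNReal.ofReal_ne_top htail _
    _ ≤ _ := by
        rw [← ENNReal.ofReal_pow (exp_nonneg _)]
        exact ENNReal.ofReal_le_ofReal
          (pow_le_pow_left₀ (exp_nonneg _) (exp_neg_le_one_sub_mul_exp hε.le) _)
end

section
/- Let D_n = x + log n for a fixed real x, and let U_1, …, U_{n/2} be independent random variables with U_j uniformly distributed on (0,1). Then ∏_{j=k_n}^{n/2} P(j(1 − U_j^{1/j}) ≤ D_n) = ∏_{j=k_n}^{n/2} (1 − (1 − D_n/j)^j) → exp(−(1/2)e^{−x}) as n → ∞, where k_n ~ (log n)^{1+ζ} for some 0 < ζ < 2. -/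
/-!
The probability is computed by inverting `u ↦ j (1 - u^{1/j})` on `(0, 1)`. For `j ≥ D_n` the
term `p_j = (1 - D_n/j)^j` lies between `e^{-D_n} (1 - D_n²/j)` and `e^{-D_n} = e^{-x}/n`.
Summing over the roughly `n/2` indices `k_n ≤ j ≤ n/2`, the correction is at most
`e^{-x} D_n² (1 + log n) / n → 0` by the harmonic bound, so `∑ p_j → e^{-x}/2`. Since every
`p_j ≤ e^{-x}/n → 0`, the product `∏ (1 - p_j)` is `exp (-(1 + o(1)) ∑ p_j) → exp (-e^{-x}/2)`.
-/

open Real MeasureTheory Filter Finset Topology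

theorem exp_neg_mul_one_sub_sq_div_le_one_sub_div_pow {t : ℝ} {n : ℕ} (ht₀ : 0 ≤ t)
    (htn : t ≤ n) : exp (-t) * (1 - t ^ 2 / n) ≤ (1 - t / n) ^ n := by
  rcases Nat.eq_zero_or_pos n with rfl | hn
  · simp [exp_le_one_iff.mpr (neg_nonpos.mpr ht₀)]
  have hn' : (0 : ℝ) < n := by exact_mod_cast hn
  have htn' : t / n ≤ 1 := div_le_one_of_le₀ htn hn'.le
  have hpow : 0 ≤ (1 - t / n) ^ n := pow_nonneg (sub_nonneg.mpr htn') _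
  have bernoulli : 1 - t ^ 2 / n ≤ (1 - t / n) ^ n * (1 + t / n) ^ n := by
    rw [← mul_pow]
    calc 1 - t ^ 2 / n = 1 + n * (-(t / n) ^ 2) := by field_simp; ring
      _ ≤ (1 + -(t / n) ^ 2) ^ n :=
        one_add_mul_le_pow (by nlinarith [htn', div_nonneg ht₀ hn'.le]) n
      _ = ((1 - t / n) * (1 + t / n)) ^ n := by ring
  have hexp : (1 + t / n) ^ n ≤ exp t := by
    calc (1 + t / n) ^ n ≤ exp (t / n) ^ n := by
          gcongr
          linarith [add_one_le_exp (t / n)]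
      _ = exp t := by rw [← exp_nat_mul, mul_div_cancel₀ _ hn'.ne']
  calc exp (-t) * (1 - t ^ 2 / n) ≤ exp (-t) * ((1 - t / n) ^ n * exp t) := by
        gcongr; exact bernoulli.trans (mul_le_mul_of_nonneg_left hexp hpow)
    _ = (1 - t / n) ^ n := by
      rw [mul_comm, mul_assoc, ← exp_add, add_neg_cancel, exp_zero, mul_one]

theorem exp_neg_div_one_sub_le_one_sub {t : ℝ} (ht : t < 1) :
    exp (-(t / (1 - t))) ≤ 1 - t := by
  have h := add_one_le_exp (t / (1 - t))
  rw [exp_neg, inv_le_comm₀ (exp_pos _) (by linarith)]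
  calc (1 - t)⁻¹ = t / (1 - t) + 1 := by field_simp [(by linarith : 1 - t ≠ 0)]; ring
    _ ≤ _ := h

theorem sum_inv_natCast_le_one_add_log {s : Finset ℕ} {n : ℕ} (hs : s ⊆ range (n + 1)) :
    ∑ j ∈ s, (j : ℝ)⁻¹ ≤ 1 + log n := by
  calc ∑ j ∈ s, (j : ℝ)⁻¹ ≤ ∑ j ∈ range (n + 1), (j : ℝ)⁻¹ :=
        sum_le_sum_of_subset_of_nonneg hs fun _ _ _ => by positivity
    _ = harmonic n := by simp [sum_range_succ', harmonic]
    _ ≤ 1 + log n := harmonic_le_one_add_log n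

theorem tendsto_prod_one_sub_of_tendsto_sum {α ι : Type*} {l : Filter α} {s : α → Finset ι}
    {p : α → ι → ℝ} {ε : α → ℝ} {L : ℝ} (hp : ∀ᶠ a in l, ∀ i ∈ s a, 0 ≤ p a i ∧ p a i ≤ ε a)
    (hε : Tendsto ε l (𝓝 0)) (hsum : Tendsto (fun a => ∑ i ∈ s a, p a i) l (𝓝 L)) :
    Tendsto (fun a => ∏ i ∈ s a, (1 - p a i)) l (𝓝 (exp (-L))) := by
  have hlower :
      Tendsto (fun a => exp (-((∑ i ∈ s a, p a i) / (1 - ε a)))) l (𝓝 (exp (-L))) := by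
    simpa using
      ((hsum.div (tendsto_const_nhds.sub hε) (by norm_num : (1 : ℝ) - 0 ≠ 0)).neg).rexp
  refine tendsto_of_tendsto_of_tendsto_of_le_of_le' hlower (hsum.neg.rexp) ?_ ?_
  · filter_upwards [hp, hε.eventually_lt_const one_pos] with a hpa hεa
    rw [sum_div, ← sum_neg_distrib, exp_sum]
    refine prod_le_prod (fun _ _ => (exp_pos _).le) fun i hi => ?_
    obtain ⟨hp0, hpε⟩ := hpa i hi
    calc exp (-(p a i / (1 - ε a))) ≤ exp (-(p a i / (1 - p a i))) := by
          gcongr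
      _ ≤ 1 - p a i := exp_neg_div_one_sub_le_one_sub (by linarith)
  · filter_upwards [hp, hε.eventually_lt_const one_pos] with a hpa hεa
    rw [← sum_neg_distrib, exp_sum]
    refine prod_le_prod (fun i hi => by linarith [hpa i hi]) fun i _ => ?_
    linarith [add_one_le_exp (-p a i)]

theorem mul_one_sub_rpow_inv_le_iff {j : ℕ} (hj : 0 < j) {D u : ℝ} (hDj : D ≤ j)
    (hu : 0 ≤ u) :
    (j : ℝ) * (1 - u ^ ((1 : ℝ) / j)) ≤ D ↔ (1 - D / j) ^ j ≤ u := by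
  have hj' : (0 : ℝ) < j := by exact_mod_cast hj
  have h0 : 0 ≤ 1 - D / j := sub_nonneg.mpr (div_le_one_of_le₀ hDj hj'.le)
  calc (j : ℝ) * (1 - u ^ ((1 : ℝ) / j)) ≤ D ↔ 1 - D / j ≤ u ^ (j : ℝ)⁻¹ := by
        rw [sub_le_comm, le_div_iff₀ hj', mul_comm, one_div]
    _ ↔ (1 - D / j) ^ (j : ℝ) ≤ u := le_rpow_inv_iff_of_pos h0 hu hj'
    _ ↔ (1 - D / j) ^ j ≤ u := by rw [rpow_natCast]

theorem volume_Ici_inter_Ioo {a b c : ℝ} (hac : a ≤ c) :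
    volume (Set.Ici c ∩ Set.Ioo a b) = ENNReal.ofReal (b - c) := by
  refine le_antisymm ?_ ?_
  · calc volume (Set.Ici c ∩ Set.Ioo a b) ≤ volume (Set.Icc c b) :=
          measure_mono fun u hu => ⟨hu.1, hu.2.2.le⟩
      _ = ENNReal.ofReal (b - c) := Real.volume_Icc
  · calc ENNReal.ofReal (b - c) = volume (Set.Ioo c b) := Real.volume_Ioo.symm
      _ ≤ volume (Set.Ici c ∩ Set.Ioo a b) :=
          measure_mono fun u hu => ⟨hu.1.le, hac.trans_lt hu.1, hu.2⟩

theorem volume_restrict_Ioo_setOf_mul_one_sub_rpow_le {j : ℕ} (hj : 0 < j) {D : ℝ}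
    (hDj : D ≤ j) :
    (volume.restrict (Set.Ioo (0 : ℝ) 1)) {u : ℝ | (j : ℝ) * (1 - u ^ ((1 : ℝ) / j)) ≤ D} =
      ENNReal.ofReal (1 - (1 - D / j) ^ j) := by
  have hj' : (0 : ℝ) < j := by exact_mod_cast hj
  rw [Measure.restrict_apply' measurableSet_Ioo,
    ← volume_Ici_inter_Ioo (pow_nonneg (sub_nonneg.mpr (div_le_one_of_le₀ hDj hj'.le)) j)]
  congr 1
  ext u
  exact and_congr_left fun hu => mul_one_sub_rpow_inv_le_iff hj hDj hu.1.le

theorem tendsto_div_natCast_of_tendsto_div_log_rpow {f : ℕ → ℝ} {r c : ℝ}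
    (hf : Tendsto (fun n => f n / log n ^ r) atTop (𝓝 c)) :
    Tendsto (fun n : ℕ => f n / n) atTop (𝓝 0) := by
  have hlog : Tendsto (fun n : ℕ => log n ^ r / n) atTop (𝓝 0) := by
    simpa [Function.comp_def] using
      (isLittleO_log_rpow_rpow_atTop r one_pos).tendsto_div_nhds_zero.comp
        tendsto_natCast_atTop_atTop
  refine (mul_zero c ▸ hf.mul hlog).congr' ?_
  filter_upwards [(tendsto_log_atTop.comp tendsto_natCast_atTop_atTop).eventually_gt_atTop 0]
    with n hn
  exact div_mul_div_cancel₀ (rpow_pos_of_pos hn r).ne'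

theorem eventually_add_log_le_of_tendsto_div_log_rpow (x : ℝ) {f : ℕ → ℝ} {ζ c : ℝ}
    (hζ : 0 < ζ) (hc : 0 < c) (hf : Tendsto (fun n => f n / log n ^ (1 + ζ)) atTop (𝓝 c)) :
    ∀ᶠ n : ℕ in atTop, x + log n ≤ f n := by
  have hlog := tendsto_log_atTop.comp tendsto_natCast_atTop_atTop
  filter_upwards [hlog.eventually_ge_atTop 1, hlog.eventually_ge_atTop x,
    ((tendsto_rpow_atTop hζ).comp hlog).eventually_ge_atTop (4 / c),
    hf.eventually_const_lt (half_lt_self hc)] with n h1 hx hζn hfn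
  simp only [Function.comp_apply] at h1 hx hζn
  have hL : (0 : ℝ) < log n := by linarith
  rw [lt_div_iff₀ (rpow_pos_of_pos hL _), rpow_add hL, rpow_one] at hfn
  calc x + log n ≤ log n * (c / 2 * (4 / c)) := by field_simp; linarith
    _ ≤ log n * (c / 2 * log n ^ ζ) := by gcongr
    _ ≤ f n := by linarith

theorem tendsto_card_Icc_half_div_natCast {k : ℕ → ℕ}
    (hk : Tendsto (fun n => (k n : ℝ) / n) atTop (𝓝 0)) :
    Tendsto (fun n : ℕ => (#(Icc (k n) (n / 2)) : ℝ) / n) atTop (𝓝 (1 / 2)) := by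
  have hlower : Tendsto (fun n : ℕ => 1 / 2 - (k n : ℝ) / n) atTop (𝓝 (1 / 2)) := by
    simpa using hk.const_sub (1 / 2 : ℝ)
  have hupper : Tendsto (fun n : ℕ => 1 / 2 + 1 / (n : ℝ)) atTop (𝓝 (1 / 2)) := by
    simpa using tendsto_one_div_atTop_nhds_zero_nat.const_add (1 / 2 : ℝ)
  refine tendsto_of_tendsto_of_tendsto_of_le_of_le' hlower hupper ?_ ?_ <;>
    filter_upwards [eventually_gt_atTop 0] with n hn <;>
    have hn' : (0 : ℝ) < n := by exact_mod_cast hn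
  · have hcard : (n : ℝ) + 1 ≤ 2 * (#(Icc (k n) (n / 2)) + k n) := by
      rw [Nat.card_Icc]; exact_mod_cast (by omega : n + 1 ≤ 2 * ((n / 2 + 1 - k n) + k n))
    rw [le_div_iff₀ hn']
    field_simp
    linarith
  · have hcard : 2 * (#(Icc (k n) (n / 2)) : ℝ) ≤ n + 2 := by
      rw [Nat.card_Icc]; exact_mod_cast (by omega : 2 * (n / 2 + 1 - k n) ≤ n + 2)
    rw [div_le_iff₀ hn']
    field_simp
    linarith

theorem tendsto_add_log_sq_mul_one_add_log_div_natCast (x : ℝ) :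
    Tendsto (fun n : ℕ => (x + log n) ^ 2 * (1 + log n) / n) atTop (𝓝 0) := by
  have hlog := tendsto_log_atTop.comp tendsto_natCast_atTop_atTop
  have hcube : Tendsto (fun n : ℕ => 8 * (log n ^ 3 / n)) atTop (𝓝 0) := by
    simpa [Function.comp_def] using
      ((tendsto_pow_log_div_mul_add_atTop 1 0 3 one_ne_zero).comp
        tendsto_natCast_atTop_atTop).const_mul 8
  refine squeeze_zero' ?_ ?_ hcube
  · filter_upwards [hlog.eventually_ge_atTop (-x), hlog.eventually_ge_atTop 0] with n hx h0
    simp only [Function.comp_apply] at hx h0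
    positivity
  · filter_upwards [hlog.eventually_ge_atTop 1, hlog.eventually_ge_atTop |x|] with n h1 hx
    simp only [Function.comp_apply] at h1 hx
    have hsq : (x + log n) ^ 2 ≤ (2 * log n) ^ 2 :=
      sq_le_sq' (by linarith [neg_abs_le x]) (by linarith [le_abs_self x])
    calc (x + log n) ^ 2 * (1 + log n) / n ≤ (2 * log n) ^ 2 * (2 * log n) / n := by
          gcongr ?_ * ?_ / _; linarith
      _ = 8 * (log n ^ 3 / n) := by ring

theorem exp_neg_add_log (x : ℝ) {y : ℝ} (hy : 0 < y) : exp (-(x + log y)) = exp (-x) / y := by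
  rw [neg_add, exp_add, exp_neg (log y), exp_log hy, div_eq_mul_inv]

section

variable (x : ℝ) {k : ℕ → ℕ}

theorem eventually_forall_mem_Icc_add_log_le (hD : ∀ᶠ n : ℕ in atTop, x + log n ≤ k n) :
    ∀ᶠ n : ℕ in atTop, 0 < n ∧ ∀ j ∈ Icc (k n) (n / 2), 0 ≤ x + log n ∧ x + log n ≤ j := by
  filter_upwards [hD, eventually_gt_atTop 0,
    (tendsto_log_atTop.comp tendsto_natCast_atTop_atTop).eventually_ge_atTop (-x)]
    with n hDn hn hx
  refine ⟨hn, fun j hj => ⟨by simp only [Function.comp_apply] at hx; linarith, ?_⟩⟩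
  exact hDn.trans (by exact_mod_cast (mem_Icc.mp hj).1)

theorem tendsto_sum_one_sub_add_log_div_pow
    (hk : Tendsto (fun n => (k n : ℝ) / n) atTop (𝓝 0))
    (hD : ∀ᶠ n : ℕ in atTop, x + log n ≤ k n) :
    Tendsto (fun n : ℕ => ∑ j ∈ Icc (k n) (n / 2), (1 - (x + log n) / j) ^ j) atTop
      (𝓝 (exp (-x) / 2)) := by
  have hcard := tendsto_card_Icc_half_div_natCast hk
  have hupper : Tendsto (fun n : ℕ => exp (-x) * (#(Icc (k n) (n / 2)) / n)) atTop
      (𝓝 (exp (-x) / 2)) := by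
    simpa [div_eq_mul_inv] using hcard.const_mul (exp (-x))
  have hlower : Tendsto (fun n : ℕ => exp (-x) * (#(Icc (k n) (n / 2)) / n
      - (x + log n) ^ 2 * (1 + log n) / n)) atTop (𝓝 (exp (-x) / 2)) := by
    simpa [div_eq_mul_inv] using
      (hcard.sub (tendsto_add_log_sq_mul_one_add_log_div_natCast x)).const_mul (exp (-x))
  refine tendsto_of_tendsto_of_tendsto_of_le_of_le' hlower hupper ?_ ?_ <;>
    filter_upwards [eventually_forall_mem_Icc_add_log_le x hD] with n ⟨hn, hbound⟩ <;>
    have hexp := exp_neg_add_log x (Nat.cast_pos.mpr hn)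
  · set D := x + log n
    have hharmonic : ∑ j ∈ Icc (k n) (n / 2), (j : ℝ)⁻¹ ≤ 1 + log n :=
      sum_inv_natCast_le_one_add_log fun j hj => by simp at hj ⊢; omega
    calc exp (-x) * (#(Icc (k n) (n / 2)) / n - D ^ 2 * (1 + log n) / n)
        = exp (-x) / n * (#(Icc (k n) (n / 2)) - D ^ 2 * (1 + log n)) := by ring
      _ ≤ exp (-x) / n *
          (#(Icc (k n) (n / 2)) - D ^ 2 * ∑ j ∈ Icc (k n) (n / 2), (j : ℝ)⁻¹) := by
        gcongr
      _ = ∑ j ∈ Icc (k n) (n / 2), exp (-D) * (1 - D ^ 2 / j) := by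
        simp only [hexp, ← mul_sum, sum_sub_distrib, sum_const, nsmul_eq_mul, mul_one,
          div_eq_mul_inv]
      _ ≤ ∑ j ∈ Icc (k n) (n / 2), (1 - D / j) ^ j := sum_le_sum fun j hj =>
          exp_neg_mul_one_sub_sq_div_le_one_sub_div_pow (hbound j hj).1 (hbound j hj).2
  · calc ∑ j ∈ Icc (k n) (n / 2), (1 - (x + log n) / j) ^ j
        ≤ ∑ j ∈ Icc (k n) (n / 2), exp (-(x + log n)) :=
          sum_le_sum fun j hj => one_sub_div_pow_le_exp_neg (hbound j hj).2
      _ = exp (-x) * (#(Icc (k n) (n / 2)) / n) := by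
        rw [sum_const, nsmul_eq_mul, hexp]; ring

theorem tendsto_prod_one_sub_one_sub_add_log_div_pow
    (hk : Tendsto (fun n => (k n : ℝ) / n) atTop (𝓝 0))
    (hD : ∀ᶠ n : ℕ in atTop, x + log n ≤ k n) :
    Tendsto (fun n : ℕ => ∏ j ∈ Icc (k n) (n / 2), (1 - (1 - (x + log n) / j) ^ j)) atTop
      (𝓝 (exp (-(1 / 2) * exp (-x)))) := by
  have hp : ∀ᶠ n : ℕ in atTop, ∀ j ∈ Icc (k n) (n / 2),
      0 ≤ (1 - (x + log n) / j) ^ j ∧ (1 - (x + log n) / j) ^ j ≤ exp (-x) / n := by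
    filter_upwards [eventually_forall_mem_Icc_add_log_le x hD] with n ⟨hn, hbound⟩ j hj
    have hDj := (hbound j hj).2
    exact ⟨pow_nonneg (sub_nonneg.mpr (div_le_one_of_le₀ hDj j.cast_nonneg)) j,
      (one_sub_div_pow_le_exp_neg hDj).trans_eq (exp_neg_add_log x (Nat.cast_pos.mpr hn))⟩
  have hε : Tendsto (fun n : ℕ => exp (-x) / n) atTop (𝓝 0) :=
    tendsto_const_nhds.div_atTop tendsto_natCast_atTop_atTop
  convert tendsto_prod_one_sub_of_tendsto_sum hp hε
    (tendsto_sum_one_sub_add_log_div_pow x hk hD) using 3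
  ring

end

theorem stmt_14_general (x : ℝ) (ζ : ℝ) (hζ1 : 0 < ζ) (k : ℕ → ℕ)
    (hk : Tendsto (fun n => (k n : ℝ) / (Real.log n) ^ (1 + ζ)) atTop (nhds 1)) :
    (∀ (j : ℕ) (D : ℝ), 1 ≤ j → 0 ≤ D → D ≤ j →
        (volume.restrict (Set.Ioo (0 : ℝ) 1))
            {u : ℝ | (j : ℝ) * (1 - u ^ ((1 : ℝ) / j)) ≤ D} =
          ENNReal.ofReal (1 - (1 - D / j) ^ j)) ∧
      Tendsto
        (fun n : ℕ =>
          ∏ j ∈ Finset.Icc (k n) (n / 2), (1 - (1 - (x + Real.log n) / j) ^ j))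
        atTop (nhds (Real.exp (-(1 / 2) * Real.exp (-x)))) :=
  ⟨fun _ _ hj _ hDj => volume_restrict_Ioo_setOf_mul_one_sub_rpow_le hj hDj,
    tendsto_prod_one_sub_one_sub_add_log_div_pow x
      (tendsto_div_natCast_of_tendsto_div_log_rpow hk)
      (eventually_add_log_le_of_tendsto_div_log_rpow x hζ1 one_pos hk)⟩

/-- For `D_n = x + log n` and independent `U_j` uniform on `(0,1)`:
each probability `P(j(1 - U_j^{1/j}) ≤ D_n)` equals `1 - (1 - D_n/j)^j`
(for `0 ≤ D ≤ j`), and the product of these over `k_n ≤ j ≤ n/2`, where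
`k_n ~ (log n)^{1+ζ}` with `0 < ζ < 2`, converges to `exp(-(1/2)e^{-x})`. -/
theorem stmt_14 (x : ℝ) (ζ : ℝ) (hζ1 : 0 < ζ) (hζ2 : ζ < 2) (k : ℕ → ℕ)
    (hk : Tendsto (fun n => (k n : ℝ) / (Real.log n) ^ (1 + ζ)) atTop (nhds 1)) :
    (∀ (j : ℕ) (D : ℝ), 1 ≤ j → 0 ≤ D → D ≤ j →
        (volume.restrict (Set.Ioo (0 : ℝ) 1))
            {u : ℝ | (j : ℝ) * (1 - u ^ ((1 : ℝ) / j)) ≤ D} =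
          ENNReal.ofReal (1 - (1 - D / j) ^ j)) ∧
      Tendsto
        (fun n : ℕ =>
          ∏ j ∈ Finset.Icc (k n) (n / 2), (1 - (1 - (x + Real.log n) / j) ^ j))
        atTop (nhds (Real.exp (-(1 / 2) * Real.exp (-x)))) :=
  stmt_14_general x ζ hζ1 k hk
end
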